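/- arXiv:1802.06208 — 5 statements merged into one kernel-verified Lean document; each statement's English description precedes it below -/
import Mathlib

section
/- Let p be a prime and let c, Q, R, φ be polynomials over ℤ_p with φ monic, such that c = φ·Q + R is the result of Euclidean division of c by φ. Then the p-adic Gauss valuation (minimum of the p-adic valuations of the coefficients) satisfies ν_p(c) = min(ν_p(Q), ν_p(R)). -/
/-! `ν_p(c) ≥ n` means `pⁿ ∣ c` in `ℤ_[p][X]`, and since Euclidean division by a monic
polynomial is `ℤ_[p]`-linear and inverted by `(Q, R) ↦ φ Q + R`, a constant divides `c` exactly
when it divides both `Q` and `R`. -/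

open Polynomial

/-- The `p`-adic Gauss valuation of a polynomial over `ℤ_[p]`: the minimum of the
`p`-adic valuations of its coefficients (`⊤` for the zero polynomial). -/
noncomputable def gaussVal (p : ℕ) [Fact p.Prime] (P : Polynomial ℤ_[p]) : ℕ∞ :=
  ⨅ i ∈ P.support, ((P.coeff i).valuation : ℕ∞)

namespace Polynomial

variable {R : Type*} [CommRing R]

theorem smul_divByMonic (a : R) (p q : R[X]) : a • p /ₘ q = a • (p /ₘ q) := by
  by_cases hq : q.Monic
  · nontriviality R
    exact (div_modByMonic_unique (a • (p /ₘ q)) (a • (p %ₘ q)) hq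
      ⟨by rw [mul_smul_comm, ← smul_add, modByMonic_add_div],
        (degree_smul_le _ _).trans_lt (degree_modByMonic_lt _ hq)⟩).1
  · simp_rw [divByMonic_eq_of_not_monic _ hq, smul_zero]

theorem C_dvd_iff_C_dvd_divByMonic_and_modByMonic {q : R[X]} (a : R) (p : R[X]) :
    C a ∣ p ↔ C a ∣ p /ₘ q ∧ C a ∣ p %ₘ q := by
  constructor
  · rintro ⟨p', rfl⟩
    rw [← smul_eq_C_mul, smul_divByMonic, smul_modByMonic, smul_eq_C_mul, smul_eq_C_mul]
    exact ⟨dvd_mul_right _ _, dvd_mul_right _ _⟩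
  · rintro ⟨hdiv, hmod⟩
    rw [← modByMonic_add_div p q]
    exact hmod.add (hdiv.mul_left q)

end Polynomial

theorem natCast_le_gaussVal_iff (p : ℕ) [Fact p.Prime] (P : ℤ_[p][X]) (n : ℕ) :
    (n : ℕ∞) ≤ gaussVal p P ↔ C ((p : ℤ_[p]) ^ n) ∣ P := by
  rw [C_dvd_iff_dvd_coeff, gaussVal, le_iInf₂_iff]
  refine forall_congr' fun i => ?_
  by_cases hi : P.coeff i = 0
  · simp [hi]
  · rw [← Ideal.mem_span_singleton, PadicInt.mem_span_pow_iff_le_valuation _ hi,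
      mem_support_iff, Nat.cast_le]
    exact ⟨fun h => h hi, fun h _ => h⟩

/-- If `c = φ·Q + R` is the Euclidean division of `c` by the monic polynomial `φ`
over `ℤ_[p]`, then `ν_p(c) = min(ν_p(Q), ν_p(R))` for the Gauss valuation. -/
theorem gaussVal_euclidean_division (p : ℕ) [Fact p.Prime]
    (c Q R φ : Polynomial ℤ_[p]) (hφ : φ.Monic)
    (hdiv : c = φ * Q + R) (hR : R = 0 ∨ R.degree < φ.degree) :
    gaussVal p c = min (gaussVal p Q) (gaussVal p R) := by
  have hRdeg : R.degree < φ.degree := by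
    rcases hR with rfl | h
    · simpa [bot_lt_iff_ne_bot] using hφ.ne_zero
    · exact h
  obtain ⟨rfl, rfl⟩ : c /ₘ φ = Q ∧ c %ₘ φ = R :=
    div_modByMonic_unique Q R hφ ⟨by rw [hdiv, add_comm], hRdeg⟩
  refine ENat.eq_of_forall_natCast_le_iff fun n => ?_
  rw [le_min_iff, natCast_le_gaussVal_iff, natCast_le_gaussVal_iff, natCast_le_gaussVal_iff]
  exact C_dvd_iff_C_dvd_divByMonic_and_modByMonic _ _
end

section
/- Let p be a prime and f ∈ ℤ_p[X] be monic and irreducible. Then the reduction f̄ of f modulo p is a power of a single monic irreducible polynomial in 𝔽_p[X]. -/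
/-!
Let `A = ℤ_p[X]/(f)`, so that `A/pA = 𝔽_p[X]/(f̄)`. If `f̄ = G H` with `u G + v H = 1`, then `u G`
is an idempotent of `A/pA`. Being finite over `ℤ_p`, the ring `A` is `p`-adically complete, hence
Henselian along `pA`, and the idempotent lifts to `A`. As `f` is prime, `A` is a domain, so the lift
is `0` or `1`, which makes `G` or `H` a unit. Splitting off the full power of a monic irreducible
factor of `f̄` therefore leaves a unit.
-/

open Polynomial

universe u

section AdicComplete
variable {R M : Type u} [CommRing R] [AddCommGroup M] [Module R M] (I : Ideal R)
  [IsNoetherianRing R] [Module.Finite R M]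

theorem IsPrecomplete.of_finite [IsPrecomplete I R] : IsPrecomplete I M := by
  rw [← AdicCompletion.of_surjective_iff]
  intro y
  obtain ⟨t, rfl⟩ := (AdicCompletion.ofTensorProduct_bijective_of_finite_of_isNoetherian I M).2 y
  induction t using TensorProduct.induction_on with
  | zero => exact ⟨0, map_zero _⟩
  | tmul r m =>
    obtain ⟨s, rfl⟩ := AdicCompletion.of_surjective I R r
    refine ⟨s • m, ?_⟩
    rw [map_smul, AdicCompletion.ofTensorProduct_tmul, ← algebraMap_smul (AdicCompletion I R) s,
      AdicCompletion.algebraMap_apply, Algebra.algebraMap_self, RingHom.id_apply]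
  | add x y hx hy =>
    obtain ⟨a, ha⟩ := hx
    obtain ⟨b, hb⟩ := hy
    exact ⟨a + b, by rw [map_add, map_add, ha, hb]⟩

theorem IsAdicComplete.of_finite [IsAdicComplete I R] : IsAdicComplete I M where
  toIsHausdorff := .of_le_jacobson I M (IsAdicComplete.le_jacobson_bot I)
  toIsPrecomplete := .of_finite I

end AdicComplete

theorem HenselianRing.exists_isIdempotentElem_sub_mem {R : Type*} [CommRing R] {I : Ideal R}
    [HenselianRing R I] {e₀ : R} (he₀ : e₀ * e₀ - e₀ ∈ I) :
    ∃ e, IsIdempotentElem e ∧ e - e₀ ∈ I := by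
  have hmonic : (X ^ 2 - X : R[X]).Monic := by monicity!
  have hidem : Ideal.Quotient.mk I e₀ * Ideal.Quotient.mk I e₀ = Ideal.Quotient.mk I e₀ := by
    rw [← map_mul, Ideal.Quotient.eq]
    exact he₀
  have hunit : IsUnit (Ideal.Quotient.mk I ((X ^ 2 - X : R[X]).derivative.eval e₀)) := by
    refine IsUnit.of_mul_eq_one (b := Ideal.Quotient.mk I (2 * e₀ - 1)) ?_
    simp only [derivative_X_pow_succ, Nat.cast_one, map_add, map_one, pow_one,
      derivative_X, eval_sub, eval_mul, eval_add, eval_one, eval_X, map_sub, map_mul, map_ofNat]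
    linear_combination 4 * hidem
  obtain ⟨e, he, hsub⟩ := HenselianRing.is_henselian _ hmonic e₀ (by simpa [sq] using he₀) hunit
  refine ⟨e, ?_, hsub⟩
  simpa [IsIdempotentElem, sq, sub_eq_zero] using he

theorem AdjoinRoot.mk_mem_map_of_iff {R k : Type*} [CommRing R] [CommRing k] {φ : R →+* k}
    (hφ : Function.Surjective φ) {f a : R[X]} :
    mk f a ∈ (RingHom.ker φ).map (of f) ↔ f.map φ ∣ a.map φ := by
  have h₁ : mk f a ∈ (RingHom.ker φ).map (of f) ↔ a ∈ (RingHom.ker φ).map C ⊔ Ideal.span {f} := by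
    rw [of, ← Ideal.map_map, ← Ideal.mem_comap, Ideal.comap_map_of_surjective _ mk_surjective,
      ← RingHom.ker_eq_comap_bot, show RingHom.ker (mk f) = Ideal.span {f} from Ideal.mk_ker]
  have h₂ : f.map φ ∣ a.map φ ↔ a ∈ (RingHom.ker φ).map C ⊔ Ideal.span {f} := by
    rw [← Ideal.mem_span_singleton, ← coe_mapRingHom, ← Set.image_singleton,
      ← Ideal.map_span, ← Ideal.mem_comap, Ideal.comap_map_of_surjective _ (map_surjective φ hφ),
      ← RingHom.ker_eq_comap_bot, ker_mapRingHom, sup_comm]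
  rw [h₁, h₂]

theorem Polynomial.Monic.henselianRing_adjoinRoot {R : Type u} [CommRing R] [IsNoetherianRing R]
    (I : Ideal R) [IsAdicComplete I R] {f : R[X]} (hf : f.Monic) :
    HenselianRing (AdjoinRoot f) (I.map (AdjoinRoot.of f)) := by
  have := hf.finite_adjoinRoot
  have : IsAdicComplete (I.map (algebraMap R (AdjoinRoot f))) (AdjoinRoot f) :=
    (IsAdicComplete.map_algebraMap_iff I _).mpr (.of_finite I)
  rw [AdjoinRoot.algebraMap_eq] at this
  infer_instance

theorem Polynomial.isUnit_or_isUnit_of_map_eq_mul_of_isCoprime {R : Type u} {k : Type*}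
    [CommRing R] [IsNoetherianRing R] [CommRing k] {φ : R →+* k} (hφ : Function.Surjective φ)
    [IsAdicComplete (RingHom.ker φ) R] {f : R[X]} (hf : f.Monic) (hprime : Prime f)
    {G H : k[X]} (hGH : f.map φ = G * H) (hcop : IsCoprime G H) : IsUnit G ∨ IsUnit H := by
  obtain ⟨u, v, huv⟩ := hcop
  obtain ⟨q, hq⟩ := map_surjective φ hφ (u * G)
  have := hf.henselianRing_adjoinRoot (RingHom.ker φ)
  have := AdjoinRoot.isDomain_of_prime hprime
  -- `u G (u G - 1) = - u v G H`
  have hidem : AdjoinRoot.mk f q * AdjoinRoot.mk f q - AdjoinRoot.mk f q ∈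
      (RingHom.ker φ).map (AdjoinRoot.of f) := by
    rw [← map_mul, ← map_sub, AdjoinRoot.mk_mem_map_of_iff hφ, Polynomial.map_sub,
      Polynomial.map_mul, hq, hGH]
    exact ⟨-(u * v), by linear_combination (u * G) * huv⟩
  obtain ⟨e, he, hsub⟩ := HenselianRing.exists_isIdempotentElem_sub_mem hidem
  rcases IsIdempotentElem.iff_eq_zero_or_one.mp he with rfl | rfl
  · right
    have hdvd : G * H ∣ u * G := by
      rw [← hGH, ← hq, ← AdjoinRoot.mk_mem_map_of_iff hφ]
      simpa using neg_mem hsub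
    exact isUnit_of_dvd_one (huv ▸ dvd_add ((dvd_mul_left H G).trans hdvd) (dvd_mul_left H v))
  · left
    have hdvd : G * H ∣ v * H := by
      rw [← hGH, show v * H = (-(q - 1)).map φ by simp [hq, ← huv],
        ← AdjoinRoot.mk_mem_map_of_iff hφ]
      simpa using hsub
    exact isUnit_of_dvd_one (huv ▸ dvd_add (dvd_mul_left G u) ((dvd_mul_right G H).trans hdvd))

theorem Polynomial.Monic.exists_monic_irreducible_pow_eq {K : Type*} [Field K] {F : K[X]}
    (hF : F.Monic) (h : ∀ G H, F = G * H → IsCoprime G H → IsUnit G ∨ IsUnit H) :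
    ∃ ψ : K[X], ψ.Monic ∧ Irreducible ψ ∧ ∃ n, F = ψ ^ n := by
  by_cases hunit : IsUnit F
  · exact ⟨X, monic_X, irreducible_X, 0, by rw [pow_zero, ← hF.isUnit_iff]; exact hunit⟩
  obtain ⟨ψ, hψ, hirr, hdvd⟩ := exists_monic_irreducible_factor F hunit
  obtain ⟨c, hc, hndvd⟩ :=
    (FiniteMultiplicity.of_not_isUnit hirr.not_isUnit hF.ne_zero).exists_eq_pow_mul_and_not_dvd
  have hpow : ¬IsUnit (ψ ^ multiplicity ψ F) := by
    rw [isUnit_pow_iff (multiplicity_pos_of_dvd hdvd).ne']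
    exact hirr.not_isUnit
  have hc_unit := (h _ _ hc (((hirr.coprime_iff_not_dvd).mpr hndvd).pow_left)).resolve_left hpow
  exact ⟨ψ, hψ, hirr, _, (eq_of_monic_of_associated (hψ.pow _) hF ⟨hc_unit.unit, hc.symm⟩).symm⟩

/-- If `f ∈ ℤ_p[X]` is monic and irreducible, then its reduction mod `p` is a power of a
single monic irreducible polynomial in `𝔽_p[X]`. -/
theorem reduction_of_irreducible_is_prime_power (p : ℕ) [Fact p.Prime]
    (f : Polynomial ℤ_[p]) (hf : f.Monic) (hirr : Irreducible f) :
    ∃ ψ : Polynomial (ZMod p), ψ.Monic ∧ Irreducible ψ ∧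
      ∃ n : ℕ, f.map (PadicInt.toZMod (p := p)) = ψ ^ n := by
  have : IsAdicComplete (RingHom.ker (PadicInt.toZMod (p := p))) ℤ_[p] := by
    rw [PadicInt.ker_toZMod]; infer_instance
  exact (hf.map _).exists_monic_irreducible_pow_eq fun G H hGH hcop ↦
    isUnit_or_isUnit_of_map_eq_mul_of_isCoprime (ZMod.ringHom_surjective _) hf hirr.prime hGH hcop
end

section
/- Let p be a prime, f ∈ ℤ_p[X] monic and irreducible with root α generating 𝕂 = ℚ_p(α), such that f̄ = φ̄^l mod p for a monic φ with irreducible reduction, and f satisfies the L_{φ,λ} property with λ = ν_p(a_l)/l. Then the unique valuation w of 𝕂 extending ν_p satisfies w(φ(α)) = λ. -/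
open Polynomial

/-!
As `f` is monic over `ℤ_[p]`, `w α ≥ 0`, so an integral polynomial takes at `α` a value whose
valuation is at least its Gauss valuation. Evaluating the `φ`-adic expansion at `α` gives
`0 = ∑ aᵢ(α) t^(l-i)` with `t = φ(α)` and `w (aᵢ(α)) ≥ i λ`: the Newton polygon of this relation is
a single segment of slope `λ`. Comparing `t^l` with the other terms gives `w t ≥ λ`, and comparing
`a_l(α)` with the other terms gives `w t ≤ λ`, once we know `w (a_l(α)) = l λ`.

For the latter, write `a_l = p^v b` with `b̄ ≠ 0`. Since `deg b̄ < deg φ̄` and `φ̄` is irreducible,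
`b̄` and `φ̄` are coprime; lifting a Bézout relation gives `U φ + V b = 1 + p Q`, and as
`w (φ(α)) ≥ λ > 0` this forces `w (b(α)) = 0`. That `λ > 0` follows by reducing the expansion
mod `p`: `φ̄` divides `ā_l`, whose degree is too small, so `ā_l = 0`.
-/

theorem WithTop.nsmul_coe_rat (n : ℕ) (q : ℚ) :
    n • (q : WithTop ℚ) = ((n * q : ℚ) : WithTop ℚ) := by
  rw [← WithTop.coe_nsmul, nsmul_eq_mul]

theorem WithTop.coe_add_mul_lt_add_nsmul {a s : ℚ} {t : WithTop ℚ} {n : ℕ} (hn : 0 < n)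
    (hst : (s : WithTop ℚ) < t) : ((a + n * s : ℚ) : WithTop ℚ) < a + n • t := by
  induction t using WithTop.recTopCoe with
  | top =>
    obtain ⟨m, rfl⟩ := Nat.exists_eq_add_one_of_ne_zero hn.ne'
    rw [succ_nsmul, WithTop.add_top, WithTop.add_top]
    exact WithTop.coe_lt_top _
  | coe t =>
    rw [WithTop.nsmul_coe_rat, ← WithTop.coe_add, WithTop.coe_lt_coe]
    have hst : s < t := WithTop.coe_lt_coe.1 hst
    gcongr

namespace AddValuation

section Ring

variable {R Γ₀ : Type*} [Ring R] [LinearOrderedAddCommMonoidWithTop Γ₀] (w : AddValuation R Γ₀)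

theorem exists_le_of_add_sum_eq_zero {ι : Type*} {s : Finset ι} {x : R} {y : ι → R}
    (hx : w x ≠ ⊤) (h : x + ∑ i ∈ s, y i = 0) : ∃ i ∈ s, w (y i) ≤ w x := by
  by_contra! hlt
  have := w.map_lt_sum hx hlt
  rw [eq_neg_of_add_eq_zero_right h, w.map_neg] at this
  exact this.false

theorem le_eval₂ {A : Type*} [Semiring A] (ι : A →+* R) {α : R} (hα : 0 ≤ w α) {P : A[X]}
    {c : Γ₀} (hc : ∀ j ∈ P.support, c ≤ w (ι (P.coeff j))) : c ≤ w (P.eval₂ ι α) := by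
  rw [eval₂_eq_sum, Polynomial.sum_def]
  refine w.map_le_sum fun j hj => ?_
  rw [w.map_mul, w.map_pow]
  exact le_add_of_le_of_nonneg (hc j hj) (nsmul_nonneg hα j)

end Ring

section Rat

variable {R : Type*} [Ring R] (w : AddValuation R (WithTop ℚ))

theorem nonneg_of_eval₂_eq_zero {A : Type*} [Semiring A] (ι : A →+* R) (hι : ∀ r, 0 ≤ w (ι r))
    {f : A[X]} (hf : f.Monic) {α : R} (hroot : f.eval₂ ι α = 0) : 0 ≤ w α := by
  by_contra! hneg
  obtain ⟨q, hq⟩ := WithTop.ne_top_iff_exists.1 hneg.ne_top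
  have hq0 : q < 0 := by rw [← hq] at hneg; exact_mod_cast hneg
  have hαn : w (α ^ f.natDegree) = ((f.natDegree * q : ℚ) : WithTop ℚ) := by
    rw [w.map_pow, ← hq, WithTop.nsmul_coe_rat]
  rw [eval₂_eq_sum_range, Finset.sum_range_succ, hf.coeff_natDegree, _root_.map_one, one_mul,
    add_comm] at hroot
  obtain ⟨i, hi, hle⟩ := w.exists_le_of_add_sum_eq_zero (hαn ▸ WithTop.coe_ne_top) hroot
  have hin : (i : ℚ) < f.natDegree := by exact_mod_cast Finset.mem_range.1 hi
  have hlt : w (α ^ f.natDegree) < w (ι (f.coeff i) * α ^ i) := by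
    rw [hαn, w.map_mul, w.map_pow, ← hq, WithTop.nsmul_coe_rat]
    refine lt_of_lt_of_le ?_ (le_add_of_nonneg_left (hι _))
    exact WithTop.coe_lt_coe.2 (by nlinarith)
  exact (hle.trans_lt hlt).false

variable {x : R} {c : ℕ → R} {l : ℕ} {s : ℚ}

theorem coe_le_of_sum_mul_pow_eq_zero (hc0 : c 0 = 1)
    (hc : ∀ i, 1 ≤ i → i ≤ l → ((i * s : ℚ) : WithTop ℚ) ≤ w (c i))
    (hsum : ∑ i ∈ Finset.range (l + 1), c i * x ^ (l - i) = 0) : (s : WithTop ℚ) ≤ w x := by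
  by_contra! hlt
  obtain ⟨q, hq⟩ := WithTop.ne_top_iff_exists.1 hlt.ne_top
  have hqs : q < s := by rw [← hq] at hlt; exact_mod_cast hlt
  have hxl : w (x ^ l) = ((l * q : ℚ) : WithTop ℚ) := by
    rw [w.map_pow, ← hq, WithTop.nsmul_coe_rat]
  rw [Finset.sum_range_succ', hc0, one_mul, Nat.sub_zero, add_comm] at hsum
  obtain ⟨i, hi, hle⟩ := w.exists_le_of_add_sum_eq_zero (hxl ▸ WithTop.coe_ne_top) hsum
  have hil : i + 1 ≤ l := Finset.mem_range.1 hi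
  have hlt : w (x ^ l) < w (c (i + 1) * x ^ (l - (i + 1))) := by
    rw [hxl, w.map_mul, w.map_pow, ← hq, WithTop.nsmul_coe_rat]
    refine lt_of_lt_of_le ?_ (add_le_add_left (hc (i + 1) (by omega) hil) _)
    rw [← WithTop.coe_add, WithTop.coe_lt_coe, Nat.cast_sub hil]
    push_cast
    nlinarith
  exact (hle.trans_lt hlt).false

theorem le_coe_of_sum_mul_pow_eq_zero (hc0 : c 0 = 1)
    (hc : ∀ i, 1 ≤ i → i ≤ l → ((i * s : ℚ) : WithTop ℚ) ≤ w (c i))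
    (hcl : w (c l) = ((l * s : ℚ) : WithTop ℚ))
    (hsum : ∑ i ∈ Finset.range (l + 1), c i * x ^ (l - i) = 0) : w x ≤ s := by
  by_contra! hlt
  rw [Finset.sum_range_succ, Nat.sub_self, pow_zero, mul_one, add_comm] at hsum
  obtain ⟨i, hi, hle⟩ := w.exists_le_of_add_sum_eq_zero (hcl ▸ WithTop.coe_ne_top) hsum
  have hil : i < l := Finset.mem_range.1 hi
  have hlt : w (c l) < w (c i * x ^ (l - i)) := by
    rw [hcl, w.map_mul, w.map_pow]
    calc ((l * s : ℚ) : WithTop ℚ) = ((i * s + (l - i : ℕ) * s : ℚ) : WithTop ℚ) := by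
          rw [Nat.cast_sub hil.le]; ring_nf
      _ < ((i * s : ℚ) : WithTop ℚ) + (l - i) • w x :=
          WithTop.coe_add_mul_lt_add_nsmul (Nat.sub_pos_of_lt hil) hlt
      _ ≤ w (c i) + (l - i) • w x := by
          refine add_le_add_left ?_ _
          rcases i with _ | i
          · simp [hc0]
          · exact hc _ (by omega) hil.le
  exact (hle.trans_lt hlt).false

end Rat

end AddValuation

theorem Polynomial.eq_zero_of_pow_eq_sum_mul_pow {R : Type*} [CommRing R] [NoZeroDivisors R]
    {Φ : R[X]} {A : ℕ → R[X]} {l : ℕ} (hl : 0 < l)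
    (h : Φ ^ l = ∑ i ∈ Finset.range (l + 1), A i * Φ ^ (l - i))
    (hdeg : (A l).degree < Φ.degree) : A l = 0 := by
  rw [Finset.sum_range_succ, Nat.sub_self, pow_zero, mul_one, ← sub_eq_iff_eq_add'] at h
  refine eq_zero_of_dvd_of_degree_lt ?_ hdeg
  rw [← h]
  refine dvd_sub (dvd_pow_self Φ hl.ne') (Finset.dvd_sum fun i hi => ?_)
  exact (dvd_pow_self Φ (Nat.sub_ne_zero_of_lt (Finset.mem_range.1 hi))).mul_left _

section PadicInt

variable {p : ℕ} [Fact p.Prime]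

theorem PadicInt.C_p_dvd_iff_map_toZMod_eq_zero (P : ℤ_[p][X]) :
    C (p : ℤ_[p]) ∣ P ↔ P.map PadicInt.toZMod = 0 := by
  rw [← Ideal.mem_span_singleton, ← Set.image_singleton, ← Ideal.map_span,
    ← PadicInt.maximalIdeal_eq_span_p, ← PadicInt.ker_toZMod, ← ker_mapRingHom, RingHom.mem_ker,
    coe_mapRingHom]

theorem gaussVal_le_valuation_coeff {P : ℤ_[p][X]} {j : ℕ} (hj : j ∈ P.support) :
    gaussVal p P ≤ (P.coeff j).valuation :=
  iInf₂_le j hj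

theorem exists_valuation_coeff_eq_gaussVal {P : ℤ_[p][X]} (hP : P ≠ 0) :
    ∃ j ∈ P.support, ((P.coeff j).valuation : ℕ∞) = gaussVal p P := by
  obtain ⟨j, hj, hmin⟩ := P.support.exists_min_image (fun j => (P.coeff j).valuation)
    (support_nonempty.2 hP)
  exact ⟨j, hj, le_antisymm (le_iInf₂ fun i hi => by exact_mod_cast hmin i hi)
    (gaussVal_le_valuation_coeff hj)⟩

theorem mul_div_le_valuation_coeff {P : ℤ_[p][X]} {i v l j : ℕ} (hl : 0 < l)
    (h : (i : ℕ∞) * v ≤ l * gaussVal p P) (hj : j ∈ P.support) :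
    (i * (v / l) : ℚ) ≤ (P.coeff j).valuation := by
  have hle : i * v ≤ l * (P.coeff j).valuation := by
    exact_mod_cast h.trans (mul_le_mul_right (gaussVal_le_valuation_coeff hj) _)
  rw [← mul_div_assoc, div_le_iff₀ (by exact_mod_cast hl), mul_comm _ (l : ℚ)]
  exact_mod_cast hle

theorem exists_eq_C_pow_mul_of_gaussVal_eq {P : ℤ_[p][X]} {v : ℕ} (hv : gaussVal p P = v) :
    ∃ b, P = C ((p : ℤ_[p]) ^ v) * b ∧ b.map PadicInt.toZMod ≠ 0 := by
  have hP : P ≠ 0 := by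
    rintro rfl
    simp [gaussVal] at hv
  obtain ⟨b, rfl⟩ : C ((p : ℤ_[p]) ^ v) ∣ P := by
    refine (C_dvd_iff_dvd_coeff _ _).2 fun j => ?_
    by_cases hj : P.coeff j = 0
    · exact hj ▸ dvd_zero _
    rw [← Ideal.mem_span_singleton, PadicInt.mem_span_pow_iff_le_valuation _ hj]
    exact_mod_cast hv ▸ gaussVal_le_valuation_coeff (mem_support_iff.2 hj)
  refine ⟨b, rfl, fun hb => ?_⟩
  obtain ⟨j, hj, hjv⟩ := exists_valuation_coeff_eq_gaussVal hP
  rw [coeff_C_mul, hv] at hjv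
  have hbj : b.coeff j ≠ 0 := fun h => by
    rw [mem_support_iff, coeff_C_mul, h, mul_zero] at hj
    exact hj rfl
  have hbj0 : (b.coeff j).valuation = 0 := by
    have := PadicInt.valuation_p_pow_mul v _ hbj
    rw [show ((p : ℤ_[p]) ^ v * b.coeff j).valuation = v by exact_mod_cast hjv] at this
    omega
  have hpb : (p : ℤ_[p]) ^ 1 ∣ b.coeff j := by
    rw [pow_one]
    exact (C_dvd_iff_dvd_coeff _ _).1 ((PadicInt.C_p_dvd_iff_map_toZMod_eq_zero b).2 hb) j
  rw [← Ideal.mem_span_singleton, PadicInt.mem_span_pow_iff_le_valuation _ hbj, hbj0] at hpb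
  omega

theorem gaussVal_ne_zero_of_map_toZMod_eq_zero {P : ℤ_[p][X]} {v : ℕ} (hv : gaussVal p P = v)
    (hP : P.map PadicInt.toZMod = 0) : v ≠ 0 := by
  rintro rfl
  obtain ⟨b, rfl, hb⟩ := exists_eq_C_pow_mul_of_gaussVal_eq hv
  simp only [pow_zero, map_one, one_mul] at hP
  exact hb hP

end PadicInt

namespace AddValuation

def ExtendsPadicValuation {K : Type*} [Field K] (p : ℕ) [Fact p.Prime] [Algebra ℚ_[p] K]
    (w : AddValuation K (WithTop ℚ)) : Prop :=
  ∀ x : ℚ_[p], x ≠ 0 → w (algebraMap ℚ_[p] K x) = ((x.valuation : ℚ) : WithTop ℚ)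

namespace ExtendsPadicValuation

variable {p : ℕ} [Fact p.Prime] {K : Type*} [Field K] [Algebra ℚ_[p] K]
variable {w : AddValuation K (WithTop ℚ)} {α : K}

theorem valuation_le_algebraMap (hw : w.ExtendsPadicValuation p) (c : ℤ_[p]) :
    ((c.valuation : ℚ) : WithTop ℚ) ≤ w (algebraMap ℚ_[p] K c) := by
  by_cases hc : c = 0
  · simp [hc]
  · rw [hw _ (PadicInt.coe_ne_zero.2 hc), PadicInt.valuation_coe]
    norm_cast

theorem valuation_algebraMap_p (hw : w.ExtendsPadicValuation p) :
    w (algebraMap ℚ_[p] K p) = 1 := by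
  rw [hw _ (Nat.cast_ne_zero.2 (Fact.out : p.Prime).ne_zero), Padic.valuation_p]
  rfl

theorem le_valuation_aeval_map (hw : w.ExtendsPadicValuation p) (hα : 0 ≤ w α)
    {P : ℤ_[p][X]} {q : ℚ} (hq : ∀ j ∈ P.support, q ≤ (P.coeff j).valuation) :
    (q : WithTop ℚ) ≤ w (aeval α (P.map PadicInt.Coe.ringHom)) := by
  rw [aeval_def, eval₂_map]
  exact w.le_eval₂ _ hα fun j hj =>
    (WithTop.coe_le_coe.2 (hq j hj)).trans (hw.valuation_le_algebraMap _)

theorem valuation_aeval_map_nonneg (hw : w.ExtendsPadicValuation p) (hα : 0 ≤ w α)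
    (P : ℤ_[p][X]) : 0 ≤ w (aeval α (P.map PadicInt.Coe.ringHom)) :=
  hw.le_valuation_aeval_map (q := 0) hα fun j _ => by positivity

theorem valuation_aeval_map_C_p_pow_mul (hw : w.ExtendsPadicValuation p) (v : ℕ) (b : ℤ_[p][X]) :
    w (aeval α ((C ((p : ℤ_[p]) ^ v) * b).map PadicInt.Coe.ringHom))
      = ((v : ℚ) : WithTop ℚ) + w (aeval α (b.map PadicInt.Coe.ringHom)) := by
  rw [Polynomial.map_mul, _root_.map_mul, w.map_mul, Polynomial.map_C, aeval_C, _root_.map_pow,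
    _root_.map_pow, map_natCast, w.map_pow, hw.valuation_algebraMap_p, ← WithTop.coe_one,
    WithTop.nsmul_coe_rat, mul_one]

theorem nonneg_of_aeval_map_eq_zero (hw : w.ExtendsPadicValuation p) {f : ℤ_[p][X]}
    (hf : f.Monic) (hroot : aeval α (f.map PadicInt.Coe.ringHom) = 0) : 0 ≤ w α := by
  rw [aeval_def, eval₂_map] at hroot
  exact w.nonneg_of_eval₂_eq_zero _
    (fun c => (WithTop.coe_le_coe.2 (by positivity)).trans (hw.valuation_le_algebraMap c))
    hf hroot

theorem valuation_aeval_map_eq_zero_of_isCoprime (hw : w.ExtendsPadicValuation p)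
    (hα : 0 ≤ w α) {φ g : ℤ_[p][X]}
    (hcop : IsCoprime (φ.map PadicInt.toZMod) (g.map PadicInt.toZMod))
    (hφ : 0 < w (aeval α (φ.map PadicInt.Coe.ringHom))) :
    w (aeval α (g.map PadicInt.Coe.ringHom)) = 0 := by
  set ev : ℤ_[p][X] →+* K := (aeval α).toRingHom.comp (mapRingHom PadicInt.Coe.ringHom)
  have hev (P : ℤ_[p][X]) : 0 ≤ w (ev P) := hw.valuation_aeval_map_nonneg hα P
  obtain ⟨u, s, hus⟩ := hcop
  obtain ⟨U, rfl⟩ := map_surjective _ (ZMod.ringHom_surjective PadicInt.toZMod) u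
  obtain ⟨V, rfl⟩ := map_surjective _ (ZMod.ringHom_surjective PadicInt.toZMod) s
  have hred : (U * φ + V * g - 1).map PadicInt.toZMod = 0 := by
    simp only [Polynomial.map_sub, Polynomial.map_add, Polynomial.map_mul, Polynomial.map_one,
      hus, sub_self]
  obtain ⟨Q, hQ⟩ := (PadicInt.C_p_dvd_iff_map_toZMod_eq_zero _).2 hred
  have hbezout : ev U * ev φ + ev V * ev g = 1 + algebraMap ℚ_[p] K p * ev Q := by
    have := congrArg ev hQ
    simp only [_root_.map_sub, _root_.map_add, _root_.map_mul, _root_.map_one] at this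
    rw [show ev (C (p : ℤ_[p])) = algebraMap ℚ_[p] K p by simp [ev]] at this
    linear_combination this
  have hunit : w (1 + algebraMap ℚ_[p] K p * ev Q) = 0 := by
    rw [w.map_add_eq_of_lt_left, w.map_one]
    rw [w.map_one, w.map_mul, hw.valuation_algebraMap_p]
    exact zero_lt_one.trans_le (le_add_of_nonneg_right (hev Q))
  change 0 < w (ev φ) at hφ
  refine le_antisymm (not_lt.1 fun (hg : 0 < w (ev g)) => ?_) (hev g)
  have hpos : 0 < w (ev U * ev φ + ev V * ev g) := by
    refine w.map_lt_add ?_ ?_ <;> rw [w.map_mul]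
    · exact hφ.trans_le (le_add_of_nonneg_left (hev U))
    · exact hg.trans_le (le_add_of_nonneg_left (hev V))
  rw [hbezout, hunit] at hpos
  exact hpos.false

end ExtendsPadicValuation

end AddValuation

theorem valuation_phi_alpha_eq_slope_general (p : ℕ) [Fact p.Prime]
    (f φ : Polynomial ℤ_[p]) (hf : f.Monic) (hφ : φ.Monic)
    (hφirr : Irreducible (φ.map (PadicInt.toZMod (p := p))))
    (l : ℕ) (hl : 0 < l)
    (hfbar : f.map (PadicInt.toZMod (p := p)) = (φ.map (PadicInt.toZMod (p := p))) ^ l)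
    -- the φ-adic expansion f = φ^l + a_1 φ^{l-1} + ⋯ + a_l
    (a : ℕ → Polynomial ℤ_[p]) (ha0 : a 0 = 1)
    (hexp : f = ∑ i ∈ Finset.range (l + 1), a i * φ ^ (l - i))
    (hdeg : ∀ i ≤ l, (a i).degree < φ.degree)
    -- λ = v/l with v = ν_p(a_l), and f satisfies the L_{φ,λ} property
    (v : ℕ) (hv : gaussVal p (a l) = (v : ℕ∞))
    (hLprop : ∀ i, 1 ≤ i → i ≤ l → (i : ℕ∞) * (v : ℕ∞) ≤ (l : ℕ∞) * gaussVal p (a i))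
    (K : Type*) [Field K] [Algebra ℚ_[p] K]
    (α : K) (hroot : Polynomial.aeval α (f.map (PadicInt.Coe.ringHom (p := p))) = 0)
    -- w is a valuation of K extending ν_p
    (w : AddValuation K (WithTop ℚ))
    (hw : ∀ x : ℚ_[p], x ≠ 0 →
      w (algebraMap ℚ_[p] K x) = ((x.valuation : ℚ) : WithTop ℚ)) :
    w (Polynomial.aeval α (φ.map (PadicInt.Coe.ringHom (p := p))))
      = (((v : ℚ) / (l : ℚ)) : WithTop ℚ) := by
  have hw : w.ExtendsPadicValuation p := hw
  set ev : ℤ_[p][X] →+* K := (aeval α).toRingHom.comp (mapRingHom PadicInt.Coe.ringHom)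
  have hα : 0 ≤ w α := hw.nonneg_of_aeval_map_eq_zero hf hroot
  have hsum : ∑ i ∈ Finset.range (l + 1), ev (a i) * ev φ ^ (l - i) = 0 := by
    have hf0 : ev f = 0 := hroot
    rw [hexp, map_sum] at hf0
    simpa only [map_mul, map_pow] using hf0
  have hev0 : ev (a 0) = 1 := by rw [ha0, map_one]
  have hc (i : ℕ) (h1 : 1 ≤ i) (h2 : i ≤ l) : ((i * (v / l) : ℚ) : WithTop ℚ) ≤ w (ev (a i)) :=
    hw.le_valuation_aeval_map hα fun j hj => mul_div_le_valuation_coeff hl (hLprop i h1 h2) hj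
  have hlower := w.coe_le_of_sum_mul_pow_eq_zero hev0 hc hsum
  have hdeg_map (P : ℤ_[p][X]) (h : P.degree < φ.degree) :
      (P.map PadicInt.toZMod).degree < (φ.map PadicInt.toZMod).degree :=
    degree_map_le.trans_lt (h.trans_eq (hφ.degree_map _).symm)
  obtain ⟨b, hab, hb⟩ := exists_eq_C_pow_mul_of_gaussVal_eq hv
  have hv0 : v ≠ 0 := gaussVal_ne_zero_of_map_toZMod_eq_zero hv <|
    eq_zero_of_pow_eq_sum_mul_pow (A := fun i => (a i).map PadicInt.toZMod) hl
      (by simpa only [hfbar, Polynomial.map_sum, Polynomial.map_mul, Polynomial.map_pow]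
        using congrArg (map PadicInt.toZMod) hexp) (hdeg_map _ (hdeg l le_rfl))
  have hbdeg : b.degree < φ.degree := by
    have hp : (p : ℤ_[p]) ^ v ≠ 0 := pow_ne_zero _ (Nat.cast_ne_zero.2 (Fact.out : p.Prime).ne_zero)
    simpa only [hab, degree_C_mul hp] using hdeg l le_rfl
  have hb0 : w (ev b) = 0 := hw.valuation_aeval_map_eq_zero_of_isCoprime hα
    ((hφirr.coprime_iff_not_dvd).2 fun hd => hb (eq_zero_of_dvd_of_degree_lt hd (hdeg_map _ hbdeg)))
    (lt_of_lt_of_le (WithTop.coe_lt_coe.2 (by positivity)) hlower)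
  have hal : w (ev (a l)) = ((l * (v / l) : ℚ) : WithTop ℚ) := by
    refine (congrArg (w ∘ ev) hab).trans ((hw.valuation_aeval_map_C_p_pow_mul v b).trans ?_)
    change _ + w (ev b) = _
    rw [hb0, add_zero, mul_div_cancel₀ _ (by positivity)]
  exact le_antisymm (w.le_coe_of_sum_mul_pow_eq_zero hev0 hc hal hsum) hlower

/-- Let `f ∈ ℤ_p[X]` be monic, irreducible over `ℚ_p`, with root `α` generating
`𝕂 = ℚ_p(α)`, such that `f̄ = φ̄^l` for a monic `φ` with irreducible reduction, and
suppose `f` satisfies the `L_{φ,λ}` property with `λ = ν_p(a_l)/l = v/l`.  Then the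
(unique) valuation `w` of `𝕂` extending `ν_p` satisfies `w(φ(α)) = λ`. -/
theorem valuation_phi_alpha_eq_slope (p : ℕ) [Fact p.Prime]
    (f φ : Polynomial ℤ_[p]) (hf : f.Monic) (hφ : φ.Monic)
    (hirr : Irreducible (f.map (PadicInt.Coe.ringHom (p := p))))
    (hφirr : Irreducible (φ.map (PadicInt.toZMod (p := p))))
    (l : ℕ) (hl : 0 < l)
    (hfbar : f.map (PadicInt.toZMod (p := p)) = (φ.map (PadicInt.toZMod (p := p))) ^ l)
    -- the φ-adic expansion f = φ^l + a_1 φ^{l-1} + ⋯ + a_l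
    (a : ℕ → Polynomial ℤ_[p]) (ha0 : a 0 = 1)
    (hexp : f = ∑ i ∈ Finset.range (l + 1), a i * φ ^ (l - i))
    (hdeg : ∀ i ≤ l, (a i).degree < φ.degree)
    -- λ = v/l with v = ν_p(a_l), and f satisfies the L_{φ,λ} property
    (v : ℕ) (hv : gaussVal p (a l) = (v : ℕ∞))
    (hLprop : ∀ i, 1 ≤ i → i ≤ l → (i : ℕ∞) * (v : ℕ∞) ≤ (l : ℕ∞) * gaussVal p (a i))
    (K : Type*) [Field K] [Algebra ℚ_[p] K]
    (α : K) (hroot : Polynomial.aeval α (f.map (PadicInt.Coe.ringHom (p := p))) = 0)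
    (hgen : Algebra.adjoin ℚ_[p] ({α} : Set K) = ⊤)
    -- w is a valuation of K extending ν_p
    (w : AddValuation K (WithTop ℚ))
    (hw : ∀ x : ℚ_[p], x ≠ 0 →
      w (algebraMap ℚ_[p] K x) = ((x.valuation : ℚ) : WithTop ℚ)) :
    w (Polynomial.aeval α (φ.map (PadicInt.Coe.ringHom (p := p))))
      = (((v : ℚ) / (l : ℚ)) : WithTop ℚ) :=
  valuation_phi_alpha_eq_slope_general p f φ hf hφ hφirr l hl hfbar a ha0 hexp hdeg v hv hLprop K α
    hroot w hw
end

section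
/- Let F ∈ ℤ[X] be monic irreducible with F̄ = ∏_{i=1}^r φ̄_i^{l_i} mod p, and suppose F satisfies the L_{φ_i,λ_i} property for each i. If for some i the order of λ_i in ℚ/ℤ equals l_i, then d_i = gcd(ν_p(a_{i,L_i}), l_i) = 1 and the residual polynomial F_{φ_i}(Y) is linear, hence irreducible over 𝔽_{φ_i}. -/
/-!
The order of `v/l` in `ℚ/ℤ` is `l / gcd(v, l)`, so it equals `l` exactly when `gcd(v, l) = 1`.
The residual polynomial then has degree at most one, and its leading coefficient is the residue
of the unit coefficient `a_{s}`: a polynomial of degree below `deg φ` with Gauss valuation zero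
reduces to a nonzero element of `𝔽_φ`, which is a field because `φ̄` is irreducible.
-/

open Polynomial

/-- The `p`-adic Gauss valuation of a polynomial over `ℤ`. -/
noncomputable def gaussValZ (p : ℕ) (P : Polynomial ℤ) : ℕ∞ :=
  ⨅ i ∈ P.support, ((padicValInt p (P.coeff i) : ℕ∞))

/-- The residue field `𝔽_φ = ℤ[X]/(p, φ(X))`. -/
abbrev FphiZ (p : ℕ) (φ : Polynomial ℤ) :=
  Polynomial ℤ ⧸ Ideal.span ({Polynomial.C (p : ℤ), φ} : Set (Polynomial ℤ))

/-- The residual polynomial `Σ_{k=0}^d red(t_k) Y^{d-k} ∈ 𝔽_φ[Y]`. -/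
noncomputable def residualPolyZ (p : ℕ) (φ : Polynomial ℤ)
    (t : ℕ → Polynomial ℤ) (d : ℕ) : Polynomial (FphiZ p φ) :=
  ∑ k ∈ Finset.range (d + 1),
    Polynomial.C (Ideal.Quotient.mk _ (t k)) * Polynomial.X ^ (d - k)

theorem Nat.gcd_eq_one_of_isLeast_mul_div_mem_int {v l : ℕ} (hl : 0 < l)
    (h : IsLeast {n : ℕ | 0 < n ∧ ∃ z : ℤ, (n : ℚ) * ((v : ℚ) / (l : ℚ)) = (z : ℚ)} l) :
    Nat.gcd v l = 1 := by
  set g := Nat.gcd v l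
  have hgpos : 0 < g := Nat.gcd_pos_of_pos_right v hl
  have hgq : (g : ℚ) ≠ 0 := by exact_mod_cast hgpos.ne'
  have hmem : l / g ∈ {n : ℕ | 0 < n ∧ ∃ z : ℤ, (n : ℚ) * ((v : ℚ) / (l : ℚ)) = (z : ℚ)} := by
    refine ⟨Nat.div_pos (Nat.le_of_dvd hl (Nat.gcd_dvd_right v l)) hgpos, (v / g : ℕ), ?_⟩
    rw [Int.cast_natCast, Nat.cast_div (Nat.gcd_dvd_right v l) hgq,
      Nat.cast_div (Nat.gcd_dvd_left v l) hgq]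
    field_simp
  have hle : l * g ≤ l * 1 := by simpa using (Nat.le_div_iff_mul_le hgpos).mp (h.2 hmem)
  exact le_antisymm (Nat.le_of_mul_le_mul_left hle hl) hgpos

section Residue

variable (p : ℕ) (φ : ℤ[X])

theorem span_C_natCast_pair_eq_comap :
    Ideal.span ({C (p : ℤ), φ} : Set ℤ[X]) =
      (Ideal.span {φ.map (Int.castRingHom (ZMod p))}).comap
        (mapRingHom (Int.castRingHom (ZMod p))) := by
  have hsurj := map_surjective (Int.castRingHom (ZMod p)) ZMod.intCast_surjective
  rw [← Set.image_singleton, ← coe_mapRingHom, ← Ideal.map_span,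
    Ideal.comap_map_of_surjective' _ hsurj, ker_mapRingHom, ZMod.ker_intCastRingHom,
    Ideal.map_span, Set.image_singleton, Ideal.span_insert, sup_comm]

theorem mem_span_C_natCast_pair_iff {g : ℤ[X]} :
    g ∈ Ideal.span ({C (p : ℤ), φ} : Set ℤ[X]) ↔
      φ.map (Int.castRingHom (ZMod p)) ∣ g.map (Int.castRingHom (ZMod p)) := by
  rw [span_C_natCast_pair_eq_comap, Ideal.mem_comap, Ideal.mem_span_singleton, coe_mapRingHom]

variable [Fact p.Prime]

theorem isMaximal_span_C_natCast_pair (hφ : Irreducible (φ.map (Int.castRingHom (ZMod p)))) :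
    (Ideal.span ({C (p : ℤ), φ} : Set ℤ[X])).IsMaximal := by
  have := PrincipalIdealRing.isMaximal_of_irreducible hφ
  rw [span_C_natCast_pair_eq_comap]
  exact Ideal.comap_isMaximal_of_surjective _
    (map_surjective (Int.castRingHom (ZMod p)) ZMod.intCast_surjective)

variable {p} in
theorem map_ne_zero_of_gaussValZ_eq_zero {g : ℤ[X]} (hg : gaussValZ p g = 0) :
    g.map (Int.castRingHom (ZMod p)) ≠ 0 := by
  intro h0
  have hdvd : ∀ n, (p : ℤ) ^ 1 ∣ g.coeff n := fun n => by
    rw [pow_one, ← ZMod.intCast_zmod_eq_zero_iff_dvd, ← eq_intCast (Int.castRingHom (ZMod p)),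
      ← coeff_map, h0, coeff_zero]
  have : (1 : ℕ∞) ≤ gaussValZ p g := le_iInf₂ fun n hn => by
    have := ((padicValInt_dvd_iff 1 (g.coeff n)).mp (hdvd n)).resolve_left (mem_support_iff.mp hn)
    exact_mod_cast this
  simp [hg] at this

variable {φ} in
theorem residue_ne_zero_of_gaussValZ_eq_zero (hφ : φ.Monic) {g : ℤ[X]}
    (hdeg : g.degree < φ.degree) (hg : gaussValZ p g = 0) :
    Ideal.Quotient.mk (Ideal.span ({C (p : ℤ), φ} : Set ℤ[X])) g ≠ 0 := by
  rw [Ne, Ideal.Quotient.eq_zero_iff_mem, mem_span_C_natCast_pair_iff]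
  intro hdvd
  refine map_ne_zero_of_gaussValZ_eq_zero hg (eq_zero_of_dvd_of_degree_lt hdvd ?_)
  rw [hφ.degree_map]
  exact degree_map_le.trans_lt hdeg

end Residue

theorem residualPolyZ_one (p : ℕ) (φ : ℤ[X]) (t : ℕ → ℤ[X]) :
    residualPolyZ p φ t 1 =
      C (Ideal.Quotient.mk _ (t 0)) * X + C (Ideal.Quotient.mk _ (t 1)) := by
  simp [residualPolyZ, Finset.sum_range_succ]

theorem residual_linear_of_order_eq_general (p : ℕ) [Fact p.Prime]
    (r : ℕ)
    (φ : Fin r → Polynomial ℤ) (hφmonic : ∀ i, (φ i).Monic)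
    (hφirr : ∀ i, Irreducible ((φ i).map (Int.castRingHom (ZMod p))))
    (l : Fin r → ℕ) (hl : ∀ i, 0 < l i)
    -- the φ_i-adic expansions of F, with s_i = L_i − l_i the largest unit index
    (L s : Fin r → ℕ) (a : Fin r → ℕ → Polynomial ℤ)
    (hdeg : ∀ i, ∀ j ≤ L i, (a i j).degree < (φ i).degree)
    (hsle : ∀ i, s i ≤ L i) (hsval : ∀ i, gaussValZ p (a i (s i)) = 0)
    (v : Fin r → ℕ)
    -- the order of λ_i in ℚ/ℤ equals l_i for a given index i
    (i : Fin r)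
    (hord : IsLeast {n : ℕ | 0 < n ∧ ∃ z : ℤ, (n : ℚ) * ((v i : ℚ) / (l i : ℚ)) = (z : ℚ)}
      (l i)) :
    Nat.gcd (v i) (l i) = 1 ∧
    ∀ t : ℕ → Polynomial ℤ,
      (∀ k ≤ Nat.gcd (v i) (l i),
        a i (s i + k * (l i / Nat.gcd (v i) (l i)))
          = Polynomial.C ((p : ℤ) ^ (k * (v i / Nat.gcd (v i) (l i)))) * t k) →
      (residualPolyZ p (φ i) t (Nat.gcd (v i) (l i))).degree = 1 ∧
      Irreducible (residualPolyZ p (φ i) t (Nat.gcd (v i) (l i))) := by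
  have hcop : Nat.gcd (v i) (l i) = 1 := Nat.gcd_eq_one_of_isLeast_mul_div_mem_int (hl i) hord
  refine ⟨hcop, fun t ht => ?_⟩
  rw [hcop] at ht ⊢
  have ht0 : a i (s i) = t 0 := by simpa using ht 0 zero_le_one
  have := isMaximal_span_C_natCast_pair p (φ i) (hφirr i)
  let := Ideal.Quotient.field (Ideal.span ({C (p : ℤ), φ i} : Set ℤ[X]))
  have hdeg1 : (residualPolyZ p (φ i) t 1).degree = 1 := by
    rw [residualPolyZ_one]
    refine degree_linear ?_
    rw [← ht0]
    exact residue_ne_zero_of_gaussValZ_eq_zero p (hφmonic i) (hdeg i (s i) (hsle i)) (hsval i)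
  exact ⟨hdeg1, irreducible_of_degree_eq_one hdeg1⟩

/-- Let `F ∈ ℤ[X]` be monic irreducible with `F̄ = ∏ φ̄_i^{l_i}` mod `p`, satisfying the
`L_{φ_i,λ_i}` property for each `i`.  If for some `i` the order of `λ_i = v_i/l_i` in
`ℚ/ℤ` (i.e. the least positive `n` with `n·λ_i ∈ ℤ`) equals `l_i`, then
`d_i = gcd(v_i, l_i) = 1` and the residual polynomial `F_{φ_i}` is linear, hence
irreducible over `𝔽_{φ_i}`. -/
theorem residual_linear_of_order_eq (p : ℕ) [Fact p.Prime]
    (F : Polynomial ℤ) (hFmonic : F.Monic) (hFirr : Irreducible F)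
    (r : ℕ) (hr : 0 < r)
    (φ : Fin r → Polynomial ℤ) (hφmonic : ∀ i, (φ i).Monic)
    (hφirr : ∀ i, Irreducible ((φ i).map (Int.castRingHom (ZMod p))))
    (hφdist : ∀ i j, i ≠ j →
      (φ i).map (Int.castRingHom (ZMod p)) ≠ (φ j).map (Int.castRingHom (ZMod p)))
    (l : Fin r → ℕ) (hl : ∀ i, 0 < l i)
    (hFbar : F.map (Int.castRingHom (ZMod p))
      = ∏ i, ((φ i).map (Int.castRingHom (ZMod p))) ^ (l i))
    -- the φ_i-adic expansions of F, with s_i = L_i − l_i the largest unit index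
    (L s : Fin r → ℕ) (a : Fin r → ℕ → Polynomial ℤ)
    (hexp : ∀ i, F = ∑ j ∈ Finset.range (L i + 1), a i j * (φ i) ^ (L i - j))
    (hdeg : ∀ i, ∀ j ≤ L i, (a i j).degree < (φ i).degree)
    (hsle : ∀ i, s i ≤ L i) (hsval : ∀ i, gaussValZ p (a i (s i)) = 0)
    (hsmax : ∀ i, ∀ j ≤ L i, gaussValZ p (a i j) = 0 → j ≤ s i)
    (hls : ∀ i, s i = L i - l i)
    (v : Fin r → ℕ) (hv : ∀ i, gaussValZ p (a i (L i)) = (v i : ℕ∞))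
    -- F satisfies the L_{φ_i,λ_i} property for each i
    (hLprop : ∀ i, ∀ k, 1 ≤ k → k ≤ l i →
      (k : ℕ∞) * (v i : ℕ∞) ≤ (l i : ℕ∞) * gaussValZ p (a i (s i + k)))
    -- the order of λ_i in ℚ/ℤ equals l_i for a given index i
    (i : Fin r)
    (hord : IsLeast {n : ℕ | 0 < n ∧ ∃ z : ℤ, (n : ℚ) * ((v i : ℚ) / (l i : ℚ)) = (z : ℚ)}
      (l i)) :
    Nat.gcd (v i) (l i) = 1 ∧
    ∀ t : ℕ → Polynomial ℤ,
      (∀ k ≤ Nat.gcd (v i) (l i),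
        a i (s i + k * (l i / Nat.gcd (v i) (l i)))
          = Polynomial.C ((p : ℤ) ^ (k * (v i / Nat.gcd (v i) (l i)))) * t k) →
      (residualPolyZ p (φ i) t (Nat.gcd (v i) (l i))).degree = 1 ∧
      Irreducible (residualPolyZ p (φ i) t (Nat.gcd (v i) (l i))) :=
  residual_linear_of_order_eq_general p r φ hφmonic hφirr l hl L s a hdeg hsle hsval v i hord
end

section
/- Let F(X) = X^6 + 36X^3 + 48 and K = ℚ(α) for a complex root α of F. Then F is irreducible over ℚ, and there is exactly one valuation w of K extending the 2-adic valuation ν_2, with ramification index e(w) = 3 and residue degree f(w) = 2. -/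
/-!
`F` is Eisenstein at 3, so `[K : ℚ] = 6`. The element `γ = α³/4` is integral, being a root of
`Y² + 9Y + 3` (that is, `F(α)/16`), and it lies in no prime `q` above 2 since `γ(γ + 9) = -3`.
Hence `α³ = 2²γ` forces `3 ∣ e(q)`, and `γ mod q` is a root of `Y² + Y + 1`, which has no root
in `𝔽₂`, so `f(q) ≥ 2`. As `Σ e(q) f(q) = 6`, there is a single prime above 2, with `e = 3` and
`f = 2`.
-/

open Polynomial

noncomputable def F : ℤ[X] := X ^ 6 + 36 * X ^ 3 + 48

theorem F_eq : F = X ^ 6 + C 36 * X ^ 3 + C 48 := by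
  simp [F]

theorem monic_F : F.Monic := by
  rw [F_eq]
  monicity!

theorem natDegree_F : F.natDegree = 6 := by
  rw [F_eq]
  compute_degree!

theorem isEisensteinAt_three_F : F.IsEisensteinAt (Ideal.span {(3 : ℤ)}) := by
  refine ⟨?_, fun {n} hn => ?_, ?_⟩
  · rw [monic_F.leadingCoeff, Ideal.mem_span_singleton]
    norm_num
  · rw [natDegree_F] at hn
    rw [F_eq, Ideal.mem_span_singleton]
    interval_cases n <;> simp
  · rw [F_eq, Ideal.span_singleton_pow, Ideal.mem_span_singleton]
    simp

theorem irreducible_map_F : Irreducible (F.map (Int.castRingHom ℚ)) :=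
  monic_F.irreducible_iff_irreducible_map_fraction_map.mp <|
    isEisensteinAt_three_F.irreducible
      ((Ideal.span_singleton_prime (by norm_num)).mpr Int.prime_three)
      monic_F.isPrimitive (by rw [natDegree_F]; norm_num)

theorem Fintype.exists_forall_eq_of_sum_eq_of_le {ι : Type*} [Fintype ι] {f : ι → ℕ} {n : ℕ}
    (hn : 0 < n) (hsum : ∑ i, f i = n) (hle : ∀ i, n ≤ f i) : ∃ i, (∀ j, j = i) ∧ f i = n := by
  classical
  obtain ⟨i⟩ : Nonempty ι := by
    by_contra h
    rw [not_nonempty_iff] at h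
    rw [Finset.univ_eq_empty, Finset.sum_empty] at hsum
    omega
  refine ⟨i, fun j => ?_, ((Finset.single_le_sum (fun _ _ => Nat.zero_le _)
    (Finset.mem_univ i)).trans_eq hsum).antisymm (hle i)⟩
  by_contra hji
  have hpair := Finset.sum_le_sum_of_subset (f := f) (Finset.subset_univ {j, i})
  rw [Finset.sum_pair hji, hsum] at hpair
  have := hle i
  have := hle j
  omega

theorem finrank_eq_natDegree_of_adjoin_eq_top {K L : Type*} [Field K] [Field L] [Algebra K L]
    {α : L} {f : K[X]} (hf : Irreducible f) (hmonic : f.Monic) (hroot : aeval α f = 0)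
    (hgen : Algebra.adjoin K {α} = ⊤) : Module.finrank K L = f.natDegree := by
  have hint : IsIntegral K α := ⟨f, hmonic, hroot⟩
  rw [(PowerBasis.ofAdjoinEqTop hint hgen).finrank, PowerBasis.ofAdjoinEqTop_dim,
    ← minpoly.eq_of_irreducible_of_monic hf hroot hmonic]

namespace Ideal

variable {R S : Type*} [CommRing R] [CommRing S] [Algebra R S]

theorem mem_primesOver_iff_isMaximal_and_comap_eq [Algebra.IsIntegral R S] {p : Ideal R}
    [p.IsMaximal] {q : Ideal S} :
    q ∈ p.primesOver S ↔ q.IsMaximal ∧ q.comap (algebraMap R S) = p :=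
  ⟨fun hq => ⟨isMaximal_of_mem_primesOver hq, (hq.2.over).symm⟩,
    fun ⟨hmax, hcomap⟩ => ⟨hmax.isPrime, ⟨hcomap.symm⟩⟩⟩

theorem exists_primesOver_eq_singleton_of_finrank_eq_mul [IsDomain R] [Module.Finite R S]
    [Module.Flat R S] (p : Ideal R) [p.IsPrime] {e f : ℕ} (hpos : 0 < e * f)
    (hrank : Module.finrank R S = e * f)
    (he : ∀ q ∈ p.primesOver S, e ≤ q.ramificationIdx R)
    (hf : ∀ q ∈ p.primesOver S, f ≤ q.inertiaDeg R) :
    ∃ P, p.primesOver S = {P} ∧ P.ramificationIdx R = e ∧ P.inertiaDeg R = f := by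
  have := (Algebra.QuasiFinite.finite_primesOver (S := S) p).fintype
  obtain ⟨P, hP, hPef⟩ := Fintype.exists_forall_eq_of_sum_eq_of_le hpos
    ((sum_ramification_inertia_eq_finrank p S).trans hrank)
    fun q => Nat.mul_le_mul (he q q.2) (hf q q.2)
  have hPe := he P P.2
  have hPf := hf P P.2
  have hle_e : P.1.ramificationIdx R * f ≤ e * f := hPef ▸ Nat.mul_le_mul_left _ hPf
  have hle_f : e * P.1.inertiaDeg R ≤ e * f := hPef ▸ Nat.mul_le_mul_right _ hPe
  refine ⟨P, Set.eq_singleton_iff_unique_mem.mpr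
    ⟨P.2, fun q hq => congrArg Subtype.val (hP ⟨q, hq⟩)⟩,
    (Nat.le_of_mul_le_mul_right hle_e (Nat.pos_of_mul_pos_left hpos)).antisymm hPe,
    (Nat.le_of_mul_le_mul_left hle_f (Nat.pos_of_mul_pos_right hpos)).antisymm hPf⟩

theorem exists_algebraMap_sub_mem_of_inertiaDeg_eq_one (p : Ideal R) [p.IsMaximal]
    (q : Ideal S) [q.IsMaximal] [q.LiesOver p] (h : q.inertiaDeg R = 1) (x : S) :
    ∃ r : R, x - algebraMap R S r ∈ q := by
  let := Quotient.field p
  rw [inertiaDeg_eq_of_isMaximal p q] at h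
  obtain ⟨c, hc⟩ :=
    (finrank_eq_one_iff_of_nonzero' (1 : S ⧸ q) one_ne_zero).mp h (Quotient.mk q x)
  obtain ⟨r, rfl⟩ := Quotient.mk_surjective c
  refine ⟨r, Quotient.eq.mp ?_⟩
  rw [← hc, Algebra.smul_def, mul_one]
  rfl

theorem one_lt_inertiaDeg_of_aeval_mem [Module.Finite R S] (p : Ideal R) [p.IsMaximal]
    (q : Ideal S) [q.IsMaximal] [q.LiesOver p] {f : R[X]} {x : S} (hx : aeval x f ∈ q)
    (hf : ∀ r : R, f.eval r ∉ p) : 1 < q.inertiaDeg R := by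
  refine lt_of_le_of_ne (inertiaDeg_pos q R) fun h => ?_
  obtain ⟨r, hr⟩ := exists_algebraMap_sub_mem_of_inertiaDeg_eq_one p q h.symm x
  apply hf r
  rw [over_def q p, under_def, mem_comap, ← aeval_algebraMap_apply_eq_algebraMap_eval]
  have hsub := mem_of_dvd _ (sub_dvd_eval_sub x (algebraMap R S r) (f.map (algebraMap R S))) hr
  rw [eval_map_algebraMap, eval_map_algebraMap] at hsub
  simpa using q.sub_mem hx hsub

open UniqueFactorizationMonoid in
theorem dvd_ramificationIdx_of_pow_eq_pow_mul [IsDedekindDomain S] (p : Ideal R) (q : Ideal S)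
    [q.IsPrime] [q.LiesOver p] {a b u : S} {m n : ℕ} (hpb : p.map (algebraMap R S) = span {b})
    (hb : b ≠ 0) (hmn : m.Coprime n) (h : a ^ m = b ^ n * u) (hu : u ∉ q) :
    m ∣ q.ramificationIdx R := by
  have hu0 : span {u} ≠ ⊥ := by
    rw [Ne, span_singleton_eq_bot]
    rintro rfl
    exact hu q.zero_mem
  have hb0 : span {b} ≠ ⊥ := by rwa [Ne, span_singleton_eq_bot]
  have hcount_u : (normalizedFactors (span {u})).count q = 0 :=
    Multiset.count_eq_zero.mpr fun hq =>
      hu (le_of_dvd (dvd_of_mem_normalizedFactors hq) (mem_span_singleton_self u))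
  have hspan : span {a} ^ m = span {b} ^ n * span {u} := by
    rw [span_singleton_pow, span_singleton_pow, span_singleton_mul_span_singleton, h]
  have hcount := congrArg (fun I => (normalizedFactors I).count q) hspan
  simp only [normalizedFactors_pow, normalizedFactors_mul (pow_ne_zero n hb0) hu0,
    Multiset.count_add, Multiset.count_nsmul, hcount_u, add_zero] at hcount
  rw [IsDedekindDomain.ramificationIdx_eq_normalizedFactors_count p q (by rwa [hpb]), hpb]
  exact hmn.dvd_of_dvd_mul_left ⟨_, hcount.symm⟩

end Ideal

section PrimesOverTwo

open Ideal

variable {S : Type*} [CommRing S] {a g : S}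

theorem notMem_of_sq_add_nine_mul_add_three_eq_zero (q : Ideal S) [q.IsPrime]
    [q.LiesOver (span {(2 : ℤ)})] (hg : g ^ 2 + 9 * g + 3 = 0) : g ∉ q := by
  intro hgq
  have h2q : (2 : S) ∈ q := by
    simpa using (mem_of_liesOver q (span {(2 : ℤ)}) 2).mp (mem_span_singleton_self 2)
  have h1 : (1 : S) = g ^ 2 + 9 * g + 3 - g * (g + 9) - 2 := by ring
  refine IsPrime.ne_top inferInstance ((eq_top_iff_one q).mpr ?_)
  rw [h1, hg, zero_sub]
  exact q.sub_mem (q.neg_mem (q.mul_mem_right _ hgq)) h2q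

theorem three_le_ramificationIdx_of_cube_eq_four_mul [IsDedekindDomain S] [CharZero S]
    [Module.Finite ℤ S] (q : Ideal S) [q.IsPrime] [q.LiesOver (span {(2 : ℤ)})]
    (ha : a ^ 3 = 2 ^ 2 * g) (hg : g ^ 2 + 9 * g + 3 = 0) : 3 ≤ q.ramificationIdx ℤ := by
  have hmap : (span {(2 : ℤ)}).map (algebraMap ℤ S) = span {(2 : S)} := by
    rw [map_span, Set.image_singleton, map_ofNat]
  exact Nat.le_of_dvd (ramificationIdx_pos q ℤ) <|
    dvd_ramificationIdx_of_pow_eq_pow_mul _ q hmap two_ne_zero (by norm_num) ha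
      (notMem_of_sq_add_nine_mul_add_three_eq_zero q hg)

theorem two_le_inertiaDeg_of_sq_add_nine_mul_add_three_eq_zero [Module.Finite ℤ S]
    (q : Ideal S) [q.IsMaximal] [q.LiesOver (span {(2 : ℤ)})] (hg : g ^ 2 + 9 * g + 3 = 0) :
    2 ≤ q.inertiaDeg ℤ := by
  have : (span {(2 : ℤ)}).IsMaximal := Int.prime_two.isMaximal_span_singleton
  have hgq : aeval g (X ^ 2 + 9 * X + 3 : ℤ[X]) ∈ q := by
    simp only [map_add, map_mul, map_pow, aeval_X, map_ofNat, hg, q.zero_mem]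
  -- `r² + 9r + 3` is odd: `Y² + 9Y + 3 ≡ Y² + Y + 1` has no root in `𝔽₂`.
  refine one_lt_inertiaDeg_of_aeval_mem (span {(2 : ℤ)}) q hgq fun r => ?_
  rw [mem_span_singleton, Int.two_dvd_ne_zero]
  rcases Int.emod_two_eq_zero_or_one r with h | h <;>
    simp [pow_two, Int.add_emod, Int.mul_emod, h]

end PrimesOverTwo

theorem exists_integralClosure_cube_eq_four_mul {K : Type*} [Field K] [CharZero K] {α : K}
    (hα : α ^ 6 + 36 * α ^ 3 + 48 = 0) :
    ∃ a g : integralClosure ℤ K, a ^ 3 = 2 ^ 2 * g ∧ g ^ 2 + 9 * g + 3 = 0 := by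
  have hγ : (α ^ 3 / 4) ^ 2 + 9 * (α ^ 3 / 4) + 3 = 0 := by
    linear_combination hα / 16
  have hαint : IsIntegral ℤ α := ⟨F, monic_F, by simpa [F, aeval_def] using hα⟩
  have hγint : IsIntegral ℤ (α ^ 3 / 4) := by
    refine ⟨X ^ 2 + C 9 * X + C 3, by monicity!, ?_⟩
    simpa [aeval_def] using hγ
  have hcoe (n : ℕ) [n.AtLeastTwo] :
      ((OfNat.ofNat n : integralClosure ℤ K) : K) = OfNat.ofNat n :=
    map_ofNat (integralClosure ℤ K).val n
  refine ⟨⟨α, hαint⟩, ⟨α ^ 3 / 4, hγint⟩, Subtype.ext ?_, Subtype.ext ?_⟩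
  · rw [SubmonoidClass.coe_pow, MulMemClass.coe_mul, SubmonoidClass.coe_pow, hcoe]
    ring
  · push_cast [hcoe]
    exact hγ

/-- Let `F(X) = X^6 + 36X^3 + 48` and `K = ℚ(α)` for a root `α` of `F`.  Then `F` is
irreducible over `ℚ`, and there is exactly one valuation of `K` extending `ν_2` —
equivalently, exactly one maximal ideal of `𝒪_K` above `2` — with ramification index `3`
and residue degree `2`. -/
theorem example2_one_valuation (K : Type*) [Field K] [Algebra ℚ K] (α : K)
    (hroot : Polynomial.aeval α
      ((X ^ 6 + 36 * X ^ 3 + 48 : Polynomial ℤ).map (Int.castRingHom ℚ)) = 0)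
    (hgen : Algebra.adjoin ℚ ({α} : Set K) = ⊤) :
    Irreducible ((X ^ 6 + 36 * X ^ 3 + 48 : Polynomial ℤ).map (Int.castRingHom ℚ)) ∧
    ∃ P : Ideal (integralClosure ℤ K),
      (P.IsMaximal ∧
        Ideal.comap (algebraMap ℤ (integralClosure ℤ K)) P = Ideal.span {(2 : ℤ)}) ∧
      (∀ Q : Ideal (integralClosure ℤ K), Q.IsMaximal →
        Ideal.comap (algebraMap ℤ (integralClosure ℤ K)) Q = Ideal.span {(2 : ℤ)} →
        Q = P) ∧
      Ideal.ramificationIdx'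
        (Ideal.span {(2 : ℤ)}) P = 3 ∧
      Ideal.inertiaDeg'
        (Ideal.span {(2 : ℤ)}) P = 2 := by
  refine ⟨irreducible_map_F, ?_⟩
  have : CharZero K := charZero_of_injective_algebraMap (algebraMap ℚ K).injective
  have hα : α ^ 6 + 36 * α ^ 3 + 48 = 0 := by simpa [aeval_def, eval₂_ofNat] using hroot
  have hrankK : Module.finrank ℚ K = 6 := by
    rw [finrank_eq_natDegree_of_adjoin_eq_top irreducible_map_F (monic_F.map _) hroot hgen,
      monic_F.natDegree_map, natDegree_F]
  have : FiniteDimensional ℚ K := Module.finite_of_finrank_pos (by omega)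
  have := integralClosure.isDedekindDomain ℤ ℚ K
  have := IsIntegralClosure.finite ℤ ℚ K (integralClosure ℤ K)
  have : (Ideal.span {(2 : ℤ)}).IsMaximal := Int.prime_two.isMaximal_span_singleton
  obtain ⟨a, g, ha, hg⟩ := exists_integralClosure_cube_eq_four_mul hα
  obtain ⟨P, hP, he, hf⟩ := Ideal.exists_primesOver_eq_singleton_of_finrank_eq_mul
    (Ideal.span {(2 : ℤ)}) (e := 3) (f := 2) (by norm_num)
    ((IsIntegralClosure.rank ℤ ℚ K _).trans hrankK)
    (fun q hq => have := Ideal.isMaximal_of_mem_primesOver hq; have := hq.2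
      three_le_ramificationIdx_of_cube_eq_four_mul q ha hg)
    (fun q hq => have := Ideal.isMaximal_of_mem_primesOver hq; have := hq.2
      two_le_inertiaDeg_of_sq_add_nine_mul_add_three_eq_zero q hg)
  have hPmem : P ∈ (Ideal.span {(2 : ℤ)}).primesOver (integralClosure ℤ K) := hP ▸ rfl
  obtain ⟨hPmax, hPcomap⟩ := Ideal.mem_primesOver_iff_isMaximal_and_comap_eq.mp hPmem
  have := hPmem.2
  refine ⟨P, ⟨hPmax, hPcomap⟩, fun Q hQ hQc => ?_, ?_, ?_⟩
  · have hQmem := Ideal.mem_primesOver_iff_isMaximal_and_comap_eq.mpr ⟨hQ, hQc⟩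
    rwa [hP, Set.mem_singleton_iff] at hQmem
  · rw [Ideal.ramificationIdx'_eq_ramificationIdx _ _ (by simp), he]
  · rw [Ideal.inertiaDeg'_eq_inertiaDeg, hf]
end
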